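/- Let G be a finite loopless graph without isolated vertices on n vertices. Then the number of orientations of G without sources and sinks equals ∑_{m=0}^{n} (-1)^m ∑_{P: |P|=m} 2^{μ(P)} · chr_{⟨P⟩}(2), where chr_F(λ) is the chromatic polynomial of F, ⟨P⟩ is the subgraph induced by P, and μ(P) is the number of edges of G with both endpoints outside P. -/

import Mathlib

open Finset
open scoped Classical


variable {V : Type*} [Fintype V] [LinearOrder V]

def IsOrient (H : SimpleGraph V) (o : V → V → Bool) : Prop :=
  (∀ i j, o i j = true → H.Adj i j) ∧ (∀ i j, H.Adj i j → (o i j = true ↔ ¬ o j i = true))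

noncomputable def fromF (H : SimpleGraph V) (f : ↥H.edgeFinset → Bool) : V → V → Bool :=
  fun i j =>
    if h : H.Adj i j then
      (if i ≤ j then f ⟨s(i,j), by rw [SimpleGraph.mem_edgeFinset, SimpleGraph.mem_edgeSet]; exact h⟩
       else !(f ⟨s(i,j), by rw [SimpleGraph.mem_edgeFinset, SimpleGraph.mem_edgeSet]; exact h⟩))
    else false

lemma isOrient_fromF (H : SimpleGraph V) (f : ↥H.edgeFinset → Bool) : IsOrient H (fromF H f) := by
  constructor
  · intro i j hij
    by_contra h
    simp [fromF, h] at hij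
  · intro i j h
    have hne : i ≠ j := H.ne_of_adj h
    have hswap : (⟨s(i,j), by rw [SimpleGraph.mem_edgeFinset, SimpleGraph.mem_edgeSet]; exact h⟩ :
        ↥H.edgeFinset) = ⟨s(j,i), by rw [SimpleGraph.mem_edgeFinset, SimpleGraph.mem_edgeSet]; exact h.symm⟩ :=
      Subtype.ext (Sym2.eq_swap)
    rcases lt_trichotomy i j with hlt | rfl | hlt
    · simp only [fromF, dif_pos h, dif_pos h.symm, if_pos hlt.le, if_neg (not_le.2 hlt), hswap]
      cases f ⟨s(j,i), _⟩ <;> simp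
    · exact absurd rfl hne
    · simp only [fromF, dif_pos h, dif_pos h.symm, if_pos hlt.le, if_neg (not_le.2 hlt), hswap]
      cases f ⟨s(j,i), _⟩ <;> simp

noncomputable def toF (H : SimpleGraph V) (o : V → V → Bool) : ↥H.edgeFinset → Bool :=
  fun e => Sym2.lift ⟨fun i j => if i ≤ j then o i j else o j i, by
    intro i j
    rcases lt_trichotomy i j with h | rfl | h
    · simp only []; rw [if_pos h.le, if_neg (not_le.2 h)]
    · rfl
    · simp only []; rw [if_neg (not_le.2 h), if_pos h.le]⟩ e.1

lemma left_inv (H : SimpleGraph V) (o : V → V → Bool) (ho : IsOrient H o) :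
    fromF H (toF H o) = o := by
  funext i j
  by_cases h : H.Adj i j
  · rcases le_or_gt i j with hle | hlt
    · simp [fromF, toF, h, hle]
    · have h1 : o i j = !(o j i) := by
        have := (ho.2 i j h)
        cases hoj : o j i <;> cases hoi : o i j <;> simp_all
      simp [fromF, toF, h, not_le.2 hlt, h1]
  · have : o i j = false := by
      cases hb : o i j
      · rfl
      · exact absurd (ho.1 i j hb) h
    simp [fromF, h, this]

lemma right_inv (H : SimpleGraph V) (f : ↥H.edgeFinset → Bool) :
    toF H (fromF H f) = f := by
  funext e
  obtain ⟨e, he⟩ := e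
  induction e with
  | h i j =>
    have h : H.Adj i j := by rwa [SimpleGraph.mem_edgeFinset, SimpleGraph.mem_edgeSet] at he
    rcases le_or_gt i j with hle | hlt
    · simp [toF, fromF, hle, h]
    · have hswap : (⟨s(j,i), by rw [SimpleGraph.mem_edgeFinset, SimpleGraph.mem_edgeSet]; exact h.symm⟩ :
          ↥H.edgeFinset) = ⟨s(i,j), he⟩ := Subtype.ext (Sym2.eq_swap)
      simp only [toF, Sym2.lift_mk, if_neg (not_le.2 hlt), fromF, dif_pos h.symm, if_pos hlt.le]
      rw [hswap]

noncomputable def orientEquiv (H : SimpleGraph V) :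
    {o : V → V → Bool // IsOrient H o} ≃ (↥H.edgeFinset → Bool) where
  toFun o := toF H o.1
  invFun f := ⟨fromF H f, isOrient_fromF H f⟩
  left_inv o := Subtype.ext (left_inv H o.1 o.2)
  right_inv f := right_inv H f

lemma card_orient (H : SimpleGraph V) :
    Fintype.card {o : V → V → Bool // IsOrient H o} = 2 ^ H.edgeFinset.card := by
  rw [Fintype.card_congr (orientEquiv H)]
  simp [Fintype.card_fun]
  congr 1; ext e; simp

section Main
variable {n : ℕ} (G : SimpleGraph (Fin n)) (P : Finset (Fin n))

def Bad (o : Fin n → Fin n → Bool) (v : Fin n) : Prop :=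
  ¬ ((∃ j, o j v = true) ∧ (∃ j, o v j = true))

noncomputable def build (σ : ↥(↑P : Set (Fin n)) → Fin 2)
    (o' : ↥(↑(univ \ P) : Set (Fin n)) → ↥(↑(univ \ P) : Set (Fin n)) → Bool) :
    Fin n → Fin n → Bool := fun i j =>
  if h : G.Adj i j then
    if hi : i ∈ P then decide (σ ⟨i, by simpa using hi⟩ = 0)
    else if hj : j ∈ P then decide (σ ⟨j, by simpa using hj⟩ = 1)
    else o' ⟨i, by simp [hi]⟩ ⟨j, by simp [hj]⟩
  else false

lemma isOrient_build (σ : {f : ↥(↑P : Set (Fin n)) → Fin 2 //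
      ∀ a b, (G.induce (↑P : Set (Fin n))).Adj a b → f a ≠ f b})
    (o' : {o' // IsOrient (G.induce (↑(univ \ P) : Set (Fin n))) o'}) :
    IsOrient G (build G P σ.1 o'.1) := by
  constructor
  · intro i j hij
    by_contra h
    simp [build, h] at hij
  · intro i j h
    by_cases hi : i ∈ P <;> by_cases hj : j ∈ P
    · have hne := σ.2 ⟨i, by simpa using hi⟩ ⟨j, by simpa using hj⟩ h
      simp only [build, dif_pos h, dif_pos h.symm, dif_pos hi, dif_pos hj]
      revert hne
      generalize σ.1 ⟨i, _⟩ = a; generalize σ.1 ⟨j, _⟩ = b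
      fin_cases a <;> fin_cases b <;> simp
    · simp only [build, dif_pos h, dif_pos h.symm, dif_pos hi, dif_neg hj]
      generalize σ.1 ⟨i, _⟩ = a
      fin_cases a <;> simp
    · simp only [build, dif_pos h, dif_pos h.symm, dif_neg hi, dif_pos hj]
      generalize σ.1 ⟨j, _⟩ = a
      fin_cases a <;> simp
    · simp only [build, dif_pos h, dif_pos h.symm, dif_neg hi, dif_neg hj]
      exact o'.2.2 _ _ h

lemma bad_build (σ : {f : ↥(↑P : Set (Fin n)) → Fin 2 //
      ∀ a b, (G.induce (↑P : Set (Fin n))).Adj a b → f a ≠ f b})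
    (o' : {o' // IsOrient (G.induce (↑(univ \ P) : Set (Fin n))) o'})
    (p : Fin n) (hp : p ∈ P) : Bad (build G P σ.1 o'.1) p := by
  rintro ⟨⟨j, hin⟩, ⟨k, hout⟩⟩
  by_cases h0 : σ.1 ⟨p, by simpa using hp⟩ = 0
  · -- p is a "source": no incoming. contradiction with hin
    have hadj : G.Adj j p := by
      by_contra h; simp [build, h] at hin
    by_cases hj : j ∈ P
    · have hne := σ.2 ⟨j, by simpa using hj⟩ ⟨p, by simpa using hp⟩ hadj
      simp only [build, dif_pos hadj, dif_pos hj] at hin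
      rw [decide_eq_true_iff] at hin
      exact hne (hin.trans h0.symm)
    · simp only [build, dif_pos hadj, dif_neg hj, dif_pos hp] at hin
      rw [decide_eq_true_iff, h0] at hin
      exact absurd hin (by decide)
  · -- σ p = 1 : no outgoing
    have hadj : G.Adj p k := by
      by_contra h; simp [build, h] at hout
    simp only [build, dif_pos hadj, dif_pos hp] at hout
    rw [decide_eq_true_iff] at hout
    exact h0 hout

end Main

section Main2
variable {n : ℕ} (G : SimpleGraph (Fin n)) (P : Finset (Fin n))

-- helper facts about bad vertices
lemma no_in_of_out {o : Fin n → Fin n → Bool} (ho : IsOrient G o) {p : Fin n}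
    (hbad : Bad o p) (hout : ∃ j, o p j = true) : ∀ j, o j p = false := by
  intro j
  cases hb : o j p
  · rfl
  · exact absurd ⟨⟨j, hb⟩, hout⟩ hbad

lemma in_of_no_out {o : Fin n → Fin n → Bool} (ho : IsOrient G o) {p j : Fin n}
    (hadj : G.Adj j p) (hout : ¬ ∃ k, o p k = true) : o j p = true := by
  have h2 := ho.2 j p hadj
  cases hb : o j p
  · exfalso
    have : o p j = true := by
      have := ho.2 p j hadj.symm
      simp [hb] at this; exact this
    exact hout ⟨j, this⟩
  · rfl

noncomputable def sigmaOf (o : Fin n → Fin n → Bool) : ↥(↑P : Set (Fin n)) → Fin 2 :=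
  fun p => if ∃ j, o ↑p j = true then 0 else 1

lemma sigmaOf_proper {o : Fin n → Fin n → Bool} (ho : IsOrient G o)
    (hbad : ∀ p ∈ P, Bad o p) :
    ∀ a b, (G.induce (↑P : Set (Fin n))).Adj a b → sigmaOf P o a ≠ sigmaOf P o b := by
  intro a b hab
  have hadj : G.Adj ↑a ↑b := hab
  have ha : (↑a : Fin n) ∈ P := by simpa using a.2
  have hb : (↑b : Fin n) ∈ P := by simpa using b.2
  simp only [sigmaOf]
  by_cases h1 : ∃ j, o ↑a j = true <;> by_cases h2 : ∃ j, o ↑b j = true <;>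
    simp only [if_pos, if_neg, h1, h2, if_true, if_false]
  · -- both have outgoing: but the edge a b gives incoming to one of them
    intro _
    have hna := no_in_of_out G ho (hbad _ ha) h1
    have hnb := no_in_of_out G ho (hbad _ hb) h2
    have := ho.2 ↑a ↑b hadj
    have h3 := hna ↑b
    have h4 := hnb ↑a
    simp [h3, h4] at this
  · decide
  · decide
  · -- neither has outgoing: edge must be oriented somehow
    intro _
    have h3 := in_of_no_out G ho hadj h2
    exact h1 ⟨↑b, h3⟩

noncomputable def restOf (o : Fin n → Fin n → Bool) :
    ↥(↑(univ \ P) : Set (Fin n)) → ↥(↑(univ \ P) : Set (Fin n)) → Bool :=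
  fun i j => o ↑i ↑j

lemma isOrient_restOf {o : Fin n → Fin n → Bool} (ho : IsOrient G o) :
    IsOrient (G.induce (↑(univ \ P) : Set (Fin n))) (restOf P o) := by
  constructor
  · intro i j hij
    exact ho.1 ↑i ↑j hij
  · intro i j hadj
    exact ho.2 ↑i ↑j hadj

end Main2

section Main3
variable {n : ℕ} (G : SimpleGraph (Fin n)) (P : Finset (Fin n))

lemma build_left_inv {o : Fin n → Fin n → Bool} (ho : IsOrient G o)
    (hbad : ∀ p ∈ P, Bad o p) :
    build G P (sigmaOf P o) (restOf P o) = o := by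
  funext i j
  by_cases h : G.Adj i j
  · by_cases hi : i ∈ P
    · simp only [build, dif_pos h, dif_pos hi, sigmaOf]
      by_cases h1 : ∃ k, o i k = true
      · have hna := no_in_of_out G ho (hbad _ hi) h1
        have h2 := ho.2 i j h
        have h3 := hna j
        simp only [h1, if_pos]
        simp [h3] at h2
        simp [h2]
      · simp only [h1, if_neg, if_false]
        have : o i j = false := by
          cases hb : o i j
          · rfl
          · exact absurd ⟨j, hb⟩ h1
        simp [this]
    · by_cases hj : j ∈ P
      · simp only [build, dif_pos h, dif_neg hi, dif_pos hj, sigmaOf]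
        by_cases h1 : ∃ k, o j k = true
        · simp only [h1, if_pos]
          have := no_in_of_out G ho (hbad _ hj) h1 i
          simp [this]
        · simp only [h1, if_neg, if_false]
          have := in_of_no_out G ho h h1
          simp [this]
      · simp only [build, dif_pos h, dif_neg hi, dif_neg hj, restOf]
  · simp only [build, dif_neg h]
    cases hb : o i j
    · rfl
    · exact absurd (ho.1 i j hb) h

lemma sigma_right_inv (hiso : ∀ v, ∃ u, G.Adj v u)
    (σ : ↥(↑P : Set (Fin n)) → Fin 2)
    (o' : ↥(↑(univ \ P) : Set (Fin n)) → ↥(↑(univ \ P) : Set (Fin n)) → Bool) :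
    sigmaOf P (build G P σ o') = σ := by
  funext p
  have hp : (↑p : Fin n) ∈ P := by simpa using p.2
  have hpe : (⟨↑p, by simpa using hp⟩ : ↥(↑P : Set (Fin n))) = p := Subtype.ext rfl
  by_cases h0 : σ p = 0
  · obtain ⟨u, hu⟩ := hiso ↑p
    have hb : build G P σ o' ↑p u = true := by
      simp only [build, dif_pos hu, dif_pos hp, hpe, h0]
      simp
    simp only [sigmaOf]
    rw [if_pos ⟨u, hb⟩, h0]
  · have h1 : σ p = 1 := by omega
    have hno : ¬ ∃ j, build G P σ o' ↑p j = true := by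
      rintro ⟨j, hj⟩
      by_cases hadj : G.Adj ↑p j
      · simp only [build, dif_pos hadj, dif_pos hp, hpe, h1] at hj
        simp at hj
      · simp [build, hadj] at hj
    simp only [sigmaOf]
    rw [if_neg hno, h1]

lemma rest_right_inv (σ : ↥(↑P : Set (Fin n)) → Fin 2)
    {o' : ↥(↑(univ \ P) : Set (Fin n)) → ↥(↑(univ \ P) : Set (Fin n)) → Bool}
    (ho' : IsOrient (G.induce (↑(univ \ P) : Set (Fin n))) o') :
    restOf P (build G P σ o') = o' := by
  funext i j
  have hi : (↑i : Fin n) ∉ P := by have := i.2; simp at this; exact this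
  have hj : (↑j : Fin n) ∉ P := by have := j.2; simp at this; exact this
  have hie : (⟨↑i, by simp [hi]⟩ : ↥(↑(univ \ P) : Set (Fin n))) = i := Subtype.ext rfl
  have hje : (⟨↑j, by simp [hj]⟩ : ↥(↑(univ \ P) : Set (Fin n))) = j := Subtype.ext rfl
  by_cases h : G.Adj ↑i ↑j
  · simp only [restOf, build, dif_pos h, dif_neg hi, dif_neg hj, hie, hje]
  · simp only [restOf, build, dif_neg h]
    cases hb : o' i j
    · rfl
    · exact absurd (ho'.1 i j hb) h

noncomputable def badEquiv (hiso : ∀ v, ∃ u, G.Adj v u) :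
    {o : Fin n → Fin n → Bool // IsOrient G o ∧ ∀ p ∈ P, Bad o p} ≃
      ({f : ↥(↑P : Set (Fin n)) → Fin 2 //
          ∀ a b, (G.induce (↑P : Set (Fin n))).Adj a b → f a ≠ f b} ×
        {o' // IsOrient (G.induce (↑(univ \ P) : Set (Fin n))) o'}) where
  toFun o := (⟨sigmaOf P o.1, sigmaOf_proper G P o.2.1 o.2.2⟩,
              ⟨restOf P o.1, isOrient_restOf G P o.2.1⟩)
  invFun x := ⟨build G P x.1.1 x.2.1,
    ⟨isOrient_build G P x.1 x.2, fun p hp => bad_build G P x.1 x.2 p hp⟩⟩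
  left_inv o := Subtype.ext (build_left_inv G P o.2.1 o.2.2)
  right_inv x := Prod.ext (Subtype.ext (sigma_right_inv G P hiso x.1.1 x.2.1))
    (Subtype.ext (rest_right_inv G P x.1.1 x.2.2))

end Main3



set_option maxHeartbeats 1000000 in
/-- The number of orientations without sources and sinks of a finite loopless graph `G`
without isolated vertices equals
`∑_{m=0}^{n} (-1)^m ∑_{P : |P| = m} 2^{μ(P)} · chr_{⟨P⟩}(2)`, where `chr_{⟨P⟩}(2)` is the
number of proper `2`-colorings of the induced subgraph `⟨P⟩` and `μ(P)` is the number of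
edges of `G` with both endpoints outside `P`. -/
theorem stmt_7 (n : ℕ) (G : SimpleGraph (Fin n)) (hiso : ∀ v, ∃ u, G.Adj v u) :
    (Fintype.card {o : Fin n → Fin n → Bool //
        (∀ i j, o i j = true → G.Adj i j) ∧
        (∀ i j, G.Adj i j → (o i j = true ↔ ¬ o j i = true)) ∧
        (∀ i, (∃ j, o j i = true) ∧ (∃ j, o i j = true))} : ℤ) =
      ∑ m ∈ Finset.range (n + 1), (-1 : ℤ) ^ m *
        ∑ P ∈ (univ : Finset (Finset (Fin n))).filter
            (fun (P : Finset (Fin n)) => P.card = m),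
          2 ^ (G.induce (↑(univ \ P) : Set (Fin n))).edgeFinset.card *
            (Fintype.card {f : ↥(↑P : Set (Fin n)) → Fin 2 //
              ∀ a b, (G.induce (↑P : Set (Fin n))).Adj a b → f a ≠ f b} : ℤ) := by
  have hsub : ∀ (pred : (Fin n → Fin n → Bool) → Prop) [DecidablePred pred],
      ((Nat.card {o : Fin n → Fin n → Bool // IsOrient G o ∧ pred o} : ℕ) : ℤ)
        = ∑ o : {o : Fin n → Fin n → Bool // IsOrient G o},
            if pred o.1 then (1 : ℤ) else 0 := by
    intro pred inst
    rw [Finset.sum_boole]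
    norm_cast
    rw [← Fintype.card_subtype]
    exact (Nat.card_eq_fintype_card).trans
      (Fintype.card_congr (Equiv.subtypeSubtypeEquivSubtypeInter _ _).symm)
  have hA : (Fintype.card {o : Fin n → Fin n → Bool //
        (∀ i j, o i j = true → G.Adj i j) ∧
        (∀ i j, G.Adj i j → (o i j = true ↔ ¬ o j i = true)) ∧
        (∀ i, (∃ j, o j i = true) ∧ (∃ j, o i j = true))} : ℤ)
      = ((Nat.card {o : Fin n → Fin n → Bool //
          IsOrient G o ∧ ∀ v : Fin n, ¬ Bad o v} : ℕ) : ℤ) := by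
    norm_cast
    refine ((Nat.card_eq_fintype_card).trans ?_).symm
    apply Fintype.card_congr
    apply Equiv.subtypeEquivRight
    intro o
    simp only [IsOrient, Bad, not_not, and_assoc]
  have key : ∀ P : Finset (Fin n),
      ((Nat.card {o : Fin n → Fin n → Bool // IsOrient G o ∧ ∀ p ∈ P, Bad o p} : ℕ) : ℤ)
        = 2 ^ (G.induce (↑(univ \ P) : Set (Fin n))).edgeFinset.card *
            (Fintype.card {f : ↥(↑P : Set (Fin n)) → Fin 2 //
              ∀ a b, (G.induce (↑P : Set (Fin n))).Adj a b → f a ≠ f b} : ℤ) := by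
    intro P
    rw [Nat.card_congr ((badEquiv G P hiso).trans (Equiv.prodCongr (Equiv.refl _)
      (orientEquiv (G.induce (↑(univ \ P) : Set (Fin n))))))]
    rw [Nat.card_eq_fintype_card, Fintype.card_prod, Fintype.card_fun]
    push_cast
    simp only [Fintype.card_coe, Fintype.card_bool]
    push_cast
    ring
    congr 1
  have main : ((Nat.card {o : Fin n → Fin n → Bool //
        IsOrient G o ∧ ∀ v : Fin n, ¬ Bad o v} : ℕ) : ℤ)
      = ∑ P : Finset (Fin n), (-1 : ℤ) ^ P.card *
          ((Nat.card {o : Fin n → Fin n → Bool //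
            IsOrient G o ∧ ∀ p ∈ P, Bad o p} : ℕ) : ℤ) := by
    refine (hsub fun o => ∀ v : Fin n, ¬ Bad o v).trans ?_
    calc ∑ o : {o : Fin n → Fin n → Bool // IsOrient G o},
          (if ∀ v : Fin n, ¬ Bad o.1 v then (1:ℤ) else 0)
        = ∑ o : {o : Fin n → Fin n → Bool // IsOrient G o},
            ∏ v : Fin n, ((-(if Bad o.1 v then (1:ℤ) else 0)) + 1) := by
          refine Finset.sum_congr rfl fun o _ => ?_
          have : ∀ v : Fin n, (-(if Bad o.1 v then (1:ℤ) else 0)) + 1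
              = if ¬ Bad o.1 v then (1:ℤ) else 0 := by
            intro v; by_cases hb : Bad o.1 v <;> simp [hb]
          simp_rw [this]
          rw [Finset.prod_boole]
          simp
      _ = ∑ o : {o : Fin n → Fin n → Bool // IsOrient G o},
            ∑ P ∈ (univ : Finset (Fin n)).powerset,
              (∏ v ∈ P, -(if Bad o.1 v then (1:ℤ) else 0)) * ∏ _v ∈ univ \ P, (1:ℤ) := by
          refine Finset.sum_congr rfl fun o _ => ?_
          rw [Finset.prod_add]
      _ = ∑ o : {o : Fin n → Fin n → Bool // IsOrient G o},
            ∑ P : Finset (Fin n),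
              (-1 : ℤ) ^ P.card * (if ∀ p ∈ P, Bad o.1 p then (1:ℤ) else 0) := by
          refine Finset.sum_congr rfl fun o _ => ?_
          rw [Finset.powerset_univ]
          refine Finset.sum_congr rfl fun P _ => ?_
          rw [Finset.prod_const_one, mul_one]
          have : (∏ v ∈ P, -(if Bad o.1 v then (1:ℤ) else 0))
              = (-1 : ℤ) ^ P.card * ∏ v ∈ P, (if Bad o.1 v then (1:ℤ) else 0) := by
            rw [← Finset.prod_const (-1 : ℤ), ← Finset.prod_mul_distrib]
            refine Finset.prod_congr rfl fun v _ => ?_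
            ring
          rw [this, Finset.prod_boole]
          by_cases hP2 : ∀ p ∈ P, Bad o.1 p <;> simp [hP2]
      _ = ∑ P : Finset (Fin n), (-1 : ℤ) ^ P.card *
            ∑ o : {o : Fin n → Fin n → Bool // IsOrient G o},
              (if ∀ p ∈ P, Bad o.1 p then (1:ℤ) else 0) := by
          rw [Finset.sum_comm]
          simp_rw [Finset.mul_sum]
      _ = ∑ P : Finset (Fin n), (-1 : ℤ) ^ P.card *
            ((Nat.card {o : Fin n → Fin n → Bool //
              IsOrient G o ∧ ∀ p ∈ P, Bad o p} : ℕ) : ℤ) := by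
          refine Finset.sum_congr rfl fun P _ => ?_
          exact congrArg (fun z => (-1:ℤ) ^ P.card * z) (hsub fun o => ∀ p ∈ P, Bad o p).symm
  rw [hA, main]
  rw [← Finset.sum_fiberwise_of_maps_to (g := fun P : Finset (Fin n) => P.card)
    (t := Finset.range (n + 1))
    (fun P _ => by
      simp only [Finset.mem_range, Nat.lt_succ_iff]
      exact le_trans (Finset.card_le_univ P) (by simp))]
  refine Finset.sum_congr rfl fun m _ => ?_
  rw [Finset.mul_sum]
  refine Finset.sum_congr rfl fun P hP => ?_
  rw [Finset.mem_filter] at hP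
  rw [key P, hP.2]
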